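/- arXiv:2004.09953 — 7 statements merged into one kernel-verified Lean document; each statement's English description precedes it below -/
import Mathlib

section
/- Let A, B be linearly independent vectors in ℝ², let a, b, c, d be integers with a·d − b·c ≠ 0, set C = a•A + b•B and D = c•A + d•B, and let K be the additive subgroup of ℝ² generated by {C, D}. Let m be the smallest positive integer such that m•A ∈ K and m•B ∈ K (such m exists). Then |a·d − b·c| divides m², and the integer n := m² / |a·d − b·c| divides m (and hence also divides |a·d − b·c|). -/
/-- Remark 1 (divisibility content): with `m` the smallest positive integer such that
`m • A, m • B ∈ K`, the determinant `|ad - bc|` divides `m²`, and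
`n = m² / |ad - bc|` divides `m` (hence also `|ad - bc|`). -/
theorem stmt1 (A B : ℝ × ℝ) (hAB : LinearIndependent ℝ ![A, B])
    (a b c d : ℤ) (hdet : a * d - b * c ≠ 0)
    (C D : ℝ × ℝ) (hC : C = a • A + b • B) (hD : D = c • A + d • B)
    (K : AddSubgroup (ℝ × ℝ)) (hK : K = AddSubgroup.closure ({C, D} : Set (ℝ × ℝ)))
    (m : ℕ) (hm : 0 < m) (hmA : m • A ∈ K) (hmB : m • B ∈ K)
    (hmin : ∀ k : ℕ, 0 < k → k • A ∈ K → k • B ∈ K → m ≤ k) :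
    |a * d - b * c| ∣ (m : ℤ) ^ 2 ∧
      ((m : ℤ) ^ 2 / |a * d - b * c|) ∣ (m : ℤ) ∧
      ((m : ℤ) ^ 2 / |a * d - b * c|) ∣ |a * d - b * c| := by
  have hli := LinearIndependent.pair_iff.mp hAB
  -- decompose memberships
  rw [hK, AddSubgroup.mem_closure_pair] at hmA hmB
  obtain ⟨x, y, hxy⟩ := hmA
  obtain ⟨z, w, hzw⟩ := hmB
  -- extract integer linear equations
  have key : ∀ (u v : ℤ) (k : ℕ), u • C + v • D = k • A →
      u * a + v * c = k ∧ u * b + v * d = 0 := by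
    intro u v k h
    rw [hC, hD] at h
    have h' : ((u * a + v * c - k : ℤ) : ℝ) • A + ((u * b + v * d : ℤ) : ℝ) • B = 0 := by
      have h2 := h
      simp only [← Int.cast_smul_eq_zsmul ℝ, ← Nat.cast_smul_eq_nsmul ℝ] at h2
      push_cast
      linear_combination (norm := module) h2
    obtain ⟨e1, e2⟩ := hli _ _ h'
    constructor
    · have : (u * a + v * c - k : ℤ) = 0 := by exact_mod_cast e1
      omega
    · exact_mod_cast e2
  obtain ⟨e1, e2⟩ := key x y m hxy
  have key' : ∀ (u v : ℤ) (k : ℕ), u • C + v • D = k • B →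
      u * a + v * c = 0 ∧ u * b + v * d = k := by
    intro u v k h
    rw [hC, hD] at h
    have h' : ((u * a + v * c : ℤ) : ℝ) • A + ((u * b + v * d - k : ℤ) : ℝ) • B = 0 := by
      have h2 := h
      simp only [← Int.cast_smul_eq_zsmul ℝ, ← Nat.cast_smul_eq_nsmul ℝ] at h2
      push_cast
      linear_combination (norm := module) h2
    obtain ⟨f1, f2⟩ := hli _ _ h'
    constructor
    · exact_mod_cast f1
    · have : (u * b + v * d - k : ℤ) = 0 := by exact_mod_cast f2
      omega
  obtain ⟨e3, e4⟩ := key' z w m hzw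
  -- determinant divides m^2
  have hdvd1 : (a * d - b * c) ∣ (m : ℤ) ^ 2 := by
    refine ⟨x * w - y * z, ?_⟩
    linear_combination (-(z * b + w * d)) * e1 + (z * a + w * c) * e2 - (m : ℤ) * e4
  have habs1 : |a * d - b * c| ∣ (m : ℤ) ^ 2 := (abs_dvd _ _).mpr hdvd1
  -- Δ • A and Δ • B are in K
  have hCK : C ∈ K := hK ▸ AddSubgroup.subset_closure (by simp)
  have hDK : D ∈ K := hK ▸ AddSubgroup.subset_closure (by simp)
  have hdA : (a * d - b * c) • A ∈ K := by
    have : (a * d - b * c) • A = d • C - b • D := by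
      rw [hC, hD]
      simp only [← Int.cast_smul_eq_zsmul ℝ]
      push_cast
      module
    rw [this]
    exact sub_mem (AddSubgroup.zsmul_mem K hCK d) (AddSubgroup.zsmul_mem K hDK b)
  have hdB : (a * d - b * c) • B ∈ K := by
    have : (a * d - b * c) • B = a • D - c • C := by
      rw [hC, hD]
      simp only [← Int.cast_smul_eq_zsmul ℝ]
      push_cast
      module
    rw [this]
    exact sub_mem (AddSubgroup.zsmul_mem K hDK a) (AddSubgroup.zsmul_mem K hCK c)
  -- |Δ| • A, |Δ| • B ∈ K
  set t : ℕ := (a * d - b * c).natAbs with ht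
  have htA : (t : ℤ) • A ∈ K := by
    rcases Int.natAbs_eq (a * d - b * c) with h | h
    · rw [← h]; exact hdA
    · have : (t : ℤ) • A = -((a * d - b * c) • A) := by
        rw [← neg_zsmul]; congr 1; omega
      rw [this]; exact neg_mem hdA
  have htB : (t : ℤ) • B ∈ K := by
    rcases Int.natAbs_eq (a * d - b * c) with h | h
    · rw [← h]; exact hdB
    · have : (t : ℤ) • B = -((a * d - b * c) • B) := by
        rw [← neg_zsmul]; congr 1; omega
      rw [this]; exact neg_mem hdB
  -- m divides t by minimality
  have hmA' : (m : ℤ) • A ∈ K := by rw [natCast_zsmul]; rw [hK, AddSubgroup.mem_closure_pair]; exact ⟨x, y, hxy⟩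
  have hmB' : (m : ℤ) • B ∈ K := by rw [natCast_zsmul]; rw [hK, AddSubgroup.mem_closure_pair]; exact ⟨z, w, hzw⟩
  have hmt : m ∣ t := by
    set r : ℕ := t % m with hr
    have hnat : r + m * (t / m) = t := Nat.mod_add_div t m
    have hcast : (r : ℤ) = (t : ℤ) - ((t / m : ℕ) : ℤ) * (m : ℤ) := by
      have h6 : (r : ℤ) + (m : ℤ) * ((t / m : ℕ) : ℤ) = (t : ℤ) := by
        exact_mod_cast congrArg (Nat.cast : ℕ → ℤ) hnat
      linarith
    have hrA : r • A ∈ K := by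
      have h5 : (r : ℤ) • A = (t : ℤ) • A - ((t / m : ℕ) : ℤ) • ((m : ℤ) • A) := by
        rw [smul_smul, hcast, sub_smul]
      rw [← natCast_zsmul, h5]
      exact sub_mem htA (AddSubgroup.zsmul_mem K hmA' _)
    have hrB : r • B ∈ K := by
      have h5 : (r : ℤ) • B = (t : ℤ) • B - ((t / m : ℕ) : ℤ) • ((m : ℤ) • B) := by
        rw [smul_smul, hcast, sub_smul]
      rw [← natCast_zsmul, h5]
      exact sub_mem htB (AddSubgroup.zsmul_mem K hmB' _)
    have hrlt : r < m := Nat.mod_lt _ hm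
    have hr0 : r = 0 := by
      by_contra h
      exact absurd (hmin r (Nat.pos_of_ne_zero h) hrA hrB) (by omega)
    exact Nat.dvd_of_mod_eq_zero hr0
  have hmabs : (m : ℤ) ∣ |a * d - b * c| := by
    rw [Int.abs_eq_natAbs]
    exact_mod_cast Int.natCast_dvd_natCast.mpr hmt
  refine ⟨habs1, ?_, ?_⟩
  · obtain ⟨s, hs⟩ := hmabs
    have hm0 : (m : ℤ) ≠ 0 := by exact_mod_cast hm.ne'
    have hmul : (m : ℤ) ^ 2 / |a * d - b * c| * |a * d - b * c| = (m : ℤ) ^ 2 :=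
      Int.ediv_mul_cancel habs1
    refine ⟨s, ?_⟩
    have : (m : ℤ) * ((m : ℤ) ^ 2 / |a * d - b * c| * s) = (m : ℤ) * (m : ℤ) := by
      linear_combination hmul - ((m : ℤ) ^ 2 / |a * d - b * c|) * hs
    exact (mul_left_cancel₀ hm0 this).symm
  · obtain ⟨s, hs⟩ := hmabs
    have hm0 : (m : ℤ) ≠ 0 := by exact_mod_cast hm.ne'
    have hmul : (m : ℤ) ^ 2 / |a * d - b * c| * |a * d - b * c| = (m : ℤ) ^ 2 :=
      Int.ediv_mul_cancel habs1
    have hn : (m : ℤ) = (m : ℤ) ^ 2 / |a * d - b * c| * s := by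
      have : (m : ℤ) * ((m : ℤ) ^ 2 / |a * d - b * c| * s) = (m : ℤ) * (m : ℤ) := by
        linear_combination hmul - ((m : ℤ) ^ 2 / |a * d - b * c|) * hs
      exact (mul_left_cancel₀ hm0 this).symm
    exact dvd_trans ⟨s, hn⟩ ⟨s, hs⟩
end

section
/- Let C, D ∈ ℝ² and let K be the additive subgroup of ℝ² generated by {C, D}. If the quotient topological additive group ℝ² ⧸ K is compact, then C and D are linearly independent over ℝ. -/
/-!
If `C` and `D` were dependent, their span would be a proper subspace of `ℝ²`, so some nonzero
linear functional `f` vanishes on it and hence on `K`. Then `f` descends to a continuous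
surjection `ℝ² ⧸ K → ℝ`, which is impossible when the quotient is compact.
-/

open Submodule

theorem not_compactSpace_quotient_closure_of_span_lt_top {E : Type*} [NormedAddCommGroup E]
    [NormedSpace ℝ E] [FiniteDimensional ℝ E] {S : Set E} (hS : span ℝ S < ⊤) :
    ¬ CompactSpace (E ⧸ AddSubgroup.closure S) := by
  intro hcompact
  obtain ⟨f, hf0, hSf⟩ := (span ℝ S).exists_le_ker_of_lt_top hS
  have hK : AddSubgroup.closure S ≤ f.toAddMonoidHom.ker :=
    (AddSubgroup.closure_le _).2 fun x hx => hSf (subset_span hx)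
  let g := QuotientAddGroup.lift _ f.toAddMonoidHom hK
  have hg : Continuous g := continuous_quot_lift _ f.continuous_of_finiteDimensional
  have hg_surj : Function.Surjective g :=
    .of_comp (g := QuotientAddGroup.mk) (f.surjective_of_ne_zero hf0)
  have : CompactSpace ℝ := hg_surj.compactSpace hg
  exact noncompact_univ ℝ isCompact_univ

/-- If the quotient of `ℝ²` by the additive subgroup generated by `C` and `D`
is compact, then `C` and `D` are linearly independent over `ℝ`. -/
theorem stmt2 (C D : ℝ × ℝ) (K : AddSubgroup (ℝ × ℝ))
    (hK : K = AddSubgroup.closure ({C, D} : Set (ℝ × ℝ)))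
    (hcompact : CompactSpace ((ℝ × ℝ) ⧸ K)) :
    LinearIndependent ℝ ![C, D] := by
  subst hK
  by_contra hCD
  refine not_compactSpace_quotient_closure_of_span_lt_top (lt_top_iff_ne_top.2 fun h => ?_) hcompact
  refine hCD (linearIndependent_of_top_le_span_of_card_eq_finrank ?_ (by simp))
  rw [Matrix.range_cons_cons_empty, h]
end

section
/- Let A, B ∈ ℝ², let ρ be a linear automorphism of ℝ² satisfying ρ(A) = B and ρ(B) = −A, and let m be a positive integer. Let α be the translation z ↦ z + A and β the translation z ↦ z + B, viewed as elements of the group of bijections of ℝ². Then the subgroup L generated by {α^m, β^m} (equivalently, by the translations by m•A and m•B) is a normal subgroup of the subgroup G generated by {α, β, ρ}. -/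
/-!
Conjugating the translation `t_v` by an additive automorphism `ρ` gives `t_{ρ v}`, and translations
commute. So `α^{±1}` and `β^{±1}` fix the generators `t_{mA}`, `t_{mB}` of `L`, while `ρ` and `ρ⁻¹`
permute them up to inversion (`t_{mA} ↦ t_{mB}, t_{mB} ↦ t_{mA}⁻¹` and
`t_{mA} ↦ t_{mB}⁻¹, t_{mB} ↦ t_{mA}`). Each generator of `G` therefore normalizes `L`.
-/

namespace Subgroup

variable {G : Type*} [Group G]

theorem mem_normalizer_closure_of_conj_mem {s : Set G} {g : G}
    (hg : ∀ x ∈ s, g * x * g⁻¹ ∈ closure s) (hg' : ∀ x ∈ s, g⁻¹ * x * g ∈ closure s) :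
    g ∈ normalizer (closure s : Set G) := by
  rw [mem_normalizer_iff_map_conj_eq, MonoidHom.map_closure]
  apply le_antisymm
  · exact (closure_le _).2 fun _ ⟨x, hx, hgx⟩ ↦ hgx ▸ hg x hx
  · rw [closure_le, ← MonoidHom.map_closure]
    exact fun x hx ↦ ⟨_, hg' x hx, by simp [mul_assoc]⟩

end Subgroup

namespace Equiv

variable {V : Type*} [AddCommGroup V]

theorem commute_addRight (v w : V) : Commute (Equiv.addRight v) (Equiv.addRight w) := by
  rw [Commute, SemiconjBy, ← addRight_add, ← addRight_add, add_comm]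

theorem addRight_mem_normalizer_closure {s : Set (Perm V)} (hs : s ⊆ Set.range Equiv.addRight)
    (v : V) : Equiv.addRight v ∈ Subgroup.normalizer (Subgroup.closure s : Set (Perm V)) := by
  refine Subgroup.mem_normalizer_closure_of_conj_mem ?_ ?_ <;> intro x hx <;>
    obtain ⟨w, rfl⟩ := hs hx
  · rw [(commute_addRight v w).mul_inv_cancel]
    exact Subgroup.subset_closure hx
  · rw [(commute_addRight v w).inv_mul_cancel]
    exact Subgroup.subset_closure hx

end Equiv

namespace AddEquiv

variable {V : Type*} [AddCommGroup V]

theorem toEquiv_conj_addRight (f : V ≃+ V) (v : V) :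
    f.toEquiv * Equiv.addRight v * f.toEquiv⁻¹ = Equiv.addRight (f v) := by
  ext x
  simp [Equiv.Perm.mul_apply, Equiv.Perm.inv_def]

open Subgroup in
theorem toEquiv_mem_normalizer_closure_addRight (f : V ≃+ V) {a b : V} (ha : f a = b)
    (hb : f b = -a) : f.toEquiv ∈
      normalizer (closure {Equiv.addRight a, Equiv.addRight b} : Set (Equiv.Perm V)) := by
  have conj_inv (v : V) : f.toEquiv⁻¹ * Equiv.addRight v * f.toEquiv = Equiv.addRight (f.symm v) :=
    f.symm.toEquiv_conj_addRight v
  have hfa : f.symm a = -b := f.symm_apply_eq.2 (by rw [map_neg, hb, neg_neg])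
  have hfb : f.symm b = a := f.symm_apply_eq.2 ha.symm
  apply mem_normalizer_closure_of_conj_mem <;> rintro _ (rfl | rfl)
  · rw [toEquiv_conj_addRight, ha]
    exact subset_closure (Set.mem_insert_of_mem _ rfl)
  · rw [toEquiv_conj_addRight, hb, ← Equiv.neg_addRight]
    exact inv_mem (subset_closure (Set.mem_insert _ _))
  · rw [conj_inv, hfa, ← Equiv.neg_addRight]
    exact inv_mem (subset_closure (Set.mem_insert_of_mem _ rfl))
  · rw [conj_inv, hfb]
    exact subset_closure (Set.mem_insert _ _)

end AddEquiv

open Subgroup in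
theorem stmt4_general (A B : ℝ × ℝ) (ρ : (ℝ × ℝ) ≃ₗ[ℝ] ℝ × ℝ)
    (hA : ρ A = B) (hB : ρ B = -A) (m : ℕ)
    (L G : Subgroup (Equiv.Perm (ℝ × ℝ)))
    (hL : L = Subgroup.closure
      ({(Equiv.addRight A) ^ m, (Equiv.addRight B) ^ m} : Set (Equiv.Perm (ℝ × ℝ))))
    (hG : G = Subgroup.closure
      ({Equiv.addRight A, Equiv.addRight B, (ρ.toEquiv : Equiv.Perm (ℝ × ℝ))} :
        Set (Equiv.Perm (ℝ × ℝ)))) :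
    L ≤ G ∧ (L.subgroupOf G).Normal := by
  subst hL hG
  simp only [Equiv.nsmul_addRight]
  have translations : {Equiv.addRight (m • A), Equiv.addRight (m • B)} ⊆
      Set.range (Equiv.addRight : ℝ × ℝ → Equiv.Perm (ℝ × ℝ)) := by
    rintro _ (rfl | rfl) <;> exact Set.mem_range_self _
  refine ⟨?_, normal_subgroupOf_of_le_normalizer ?_⟩ <;> rw [closure_le]
  · rintro _ (rfl | rfl) <;> rw [← Equiv.nsmul_addRight] <;>
      exact pow_mem (subset_closure (by simp)) m
  · rintro _ (rfl | rfl | rfl)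
    · exact Equiv.addRight_mem_normalizer_closure translations A
    · exact Equiv.addRight_mem_normalizer_closure translations B
    · exact ρ.toAddEquiv.toEquiv_mem_normalizer_closure_addRight
        ((map_nsmul _ m A).trans (congrArg (m • ·) hA))
        ((map_nsmul _ m B).trans ((congrArg (m • ·) hB).trans (smul_neg m A)))

/-- Claim 2: with `ρ A = B`, `ρ B = -A` (rotation by 90°), the subgroup generated by
`α^m, β^m` is normal in the subgroup generated by `α, β, ρ`. -/
theorem stmt4 (A B : ℝ × ℝ) (ρ : (ℝ × ℝ) ≃ₗ[ℝ] ℝ × ℝ)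
    (hA : ρ A = B) (hB : ρ B = -A) (m : ℕ) (hm : 0 < m)
    (L G : Subgroup (Equiv.Perm (ℝ × ℝ)))
    (hL : L = Subgroup.closure
      ({(Equiv.addRight A) ^ m, (Equiv.addRight B) ^ m} : Set (Equiv.Perm (ℝ × ℝ))))
    (hG : G = Subgroup.closure
      ({Equiv.addRight A, Equiv.addRight B, (ρ.toEquiv : Equiv.Perm (ℝ × ℝ))} :
        Set (Equiv.Perm (ℝ × ℝ)))) :
    L ≤ G ∧ (L.subgroupOf G).Normal :=
  stmt4_general A B ρ hA hB m L G hL hG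
end

section
/- Let A, B ∈ ℝ², let ρ be a linear automorphism of ℝ² satisfying ρ(A) = B and ρ(B) = B − A, and let m be a positive integer. Let α be the translation z ↦ z + A and β the translation z ↦ z + B, viewed as elements of the group of bijections of ℝ². Then the subgroup L generated by {α^m, β^m} is a normal subgroup of the subgroup G generated by {α, β, ρ}. -/
/-! Writing `t v` for the translation by `v`, the subgroup `L` is generated by `t (m • A)`
and `t (m • B)`, so it consists of the translations by the lattice `ℤ (m • A) + ℤ (m • B)`.
Translations commute with each other and hence normalize `L`. Conjugating `t v` by `ρ` gives
`t (ρ v)`, and both `ρ` and `ρ⁻¹` preserve the lattice: `ρ` sends `m • A ↦ m • B` and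
`m • B ↦ m • B - m • A`, while `ρ⁻¹` sends `m • A ↦ m • A - m • B` and `m • B ↦ m • A`.
So every generator of `G` normalizes `L`. -/

lemma Subgroup.mem_normalizer_closure_of_conj_mem_s6 {G : Type*} [Group G] {s : Set G} {g : G}
    (h : ∀ x ∈ s, g * x * g⁻¹ ∈ Subgroup.closure s)
    (h' : ∀ x ∈ s, g⁻¹ * x * g ∈ Subgroup.closure s) :
    g ∈ Subgroup.normalizer (Subgroup.closure s) := by
  rw [Subgroup.mem_normalizer_iff_map_conj_eq, MonoidHom.map_closure]
  refine le_antisymm ((Subgroup.closure_le _).2 ?_) ((Subgroup.closure_le _).2 fun x hx => ?_)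
  · rintro _ ⟨x, hx, rfl⟩
    exact h x hx
  · rw [← MonoidHom.map_closure]
    exact ⟨g⁻¹ * x * g, h' x hx, by simp [mul_assoc]⟩

lemma Equiv.addRight_mem_closure_image_addRight {M : Type*} [AddCommGroup M] {S : Set M}
    {w : M} (hw : w ∈ AddSubgroup.closure S) :
    Equiv.addRight w ∈ Subgroup.closure (Equiv.addRight '' S : Set (Equiv.Perm M)) := by
  induction hw using AddSubgroup.closure_induction with
  | mem v hv => exact Subgroup.subset_closure ⟨v, hv, rfl⟩
  | zero => simp
  | add v w _ _ hv hw => simpa using mul_mem hw hv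
  | neg v _ hv => simpa using inv_mem hv

lemma Equiv.addRight_mem_normalizer_closure_image_addRight {M : Type*} [AddCommGroup M]
    (w : M) (S : Set M) :
    Equiv.addRight w ∈
      Subgroup.normalizer (Subgroup.closure (Equiv.addRight '' S : Set (Equiv.Perm M))) := by
  refine Subgroup.centralizer_le_normalizer _ ?_
  rw [Subgroup.centralizer_closure, Subgroup.mem_centralizer_iff]
  rintro _ ⟨v, -, rfl⟩
  rw [← Equiv.addRight_add, ← Equiv.addRight_add, add_comm]

namespace AddEquiv

variable {M : Type*} [AddCommGroup M]

lemma toEquiv_mul_addRight_mul_inv (σ : M ≃+ M) (v : M) :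
    (σ.toEquiv : Equiv.Perm M) * Equiv.addRight v * (σ.toEquiv : Equiv.Perm M)⁻¹ =
      Equiv.addRight (σ v) := by
  ext x
  simp [Equiv.Perm.inv_def]

lemma toEquiv_mem_normalizer_closure_image_addRight (σ : M ≃+ M) {S : Set M}
    (h : ∀ v ∈ S, σ v ∈ AddSubgroup.closure S)
    (h' : ∀ v ∈ S, σ.symm v ∈ AddSubgroup.closure S) :
    (σ.toEquiv : Equiv.Perm M) ∈
      Subgroup.normalizer (Subgroup.closure (Equiv.addRight '' S : Set (Equiv.Perm M))) := by
  refine Subgroup.mem_normalizer_closure_of_conj_mem_s6 ?_ ?_ <;> rintro _ ⟨v, hv, rfl⟩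
  · rw [toEquiv_mul_addRight_mul_inv]
    exact Equiv.addRight_mem_closure_image_addRight (h v hv)
  · change (σ.symm.toEquiv : Equiv.Perm M) * _ * (σ.symm.toEquiv : Equiv.Perm M)⁻¹ ∈ _
    rw [toEquiv_mul_addRight_mul_inv]
    exact Equiv.addRight_mem_closure_image_addRight (h' v hv)

lemma toEquiv_mem_normalizer_closure_image_addRight_pair (σ : M ≃+ M) {u v : M}
    (hu : σ u = v) (hv : σ v = v - u) :
    (σ.toEquiv : Equiv.Perm M) ∈
      Subgroup.normalizer (Subgroup.closure (Equiv.addRight '' {u, v} : Set (Equiv.Perm M))) := by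
  have hu' : σ.symm u = u - v := by
    rw [σ.symm_apply_eq, map_sub, hu, hv]
    abel
  have hv' : σ.symm v = u := σ.symm_apply_eq.2 hu.symm
  have hu_mem : u ∈ AddSubgroup.closure {u, v} := AddSubgroup.subset_closure (by simp)
  have hv_mem : v ∈ AddSubgroup.closure {u, v} := AddSubgroup.subset_closure (by simp)
  refine σ.toEquiv_mem_normalizer_closure_image_addRight ?_ ?_ <;>
    simp only [Set.forall_mem_insert, Set.mem_singleton_iff, forall_eq, hu, hv, hu', hv']
  exacts [⟨hv_mem, sub_mem hv_mem hu_mem⟩, ⟨sub_mem hu_mem hv_mem, hu_mem⟩]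

end AddEquiv

theorem stmt6_general (A B : ℝ × ℝ) (ρ : (ℝ × ℝ) ≃ₗ[ℝ] ℝ × ℝ)
    (hA : ρ A = B) (hB : ρ B = B - A) (m : ℕ)
    (L G : Subgroup (Equiv.Perm (ℝ × ℝ)))
    (hL : L = Subgroup.closure
      ({(Equiv.addRight A) ^ m, (Equiv.addRight B) ^ m} : Set (Equiv.Perm (ℝ × ℝ))))
    (hG : G = Subgroup.closure
      ({Equiv.addRight A, Equiv.addRight B, (ρ.toEquiv : Equiv.Perm (ℝ × ℝ))} :
        Set (Equiv.Perm (ℝ × ℝ)))) :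
    L ≤ G ∧ (L.subgroupOf G).Normal := by
  have hLG : L ≤ G := by
    rw [hL, hG, Subgroup.closure_le]
    rintro _ (rfl | rfl) <;> exact pow_mem (Subgroup.subset_closure (by simp)) m
  refine ⟨hLG, (Subgroup.normal_subgroupOf_iff_le_normalizer hLG).2 ?_⟩
  rw [hG, Subgroup.closure_le, hL, Equiv.nsmul_addRight, Equiv.nsmul_addRight,
    ← Set.image_pair]
  rintro _ (rfl | rfl | rfl)
  · exact Equiv.addRight_mem_normalizer_closure_image_addRight _ _
  · exact Equiv.addRight_mem_normalizer_closure_image_addRight _ _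
  · have hmA : ρ (m • A) = m • B := by rw [map_nsmul, hA]
    have hmB : ρ (m • B) = m • B - m • A := by rw [map_nsmul, hB, smul_sub]
    exact ρ.toAddEquiv.toEquiv_mem_normalizer_closure_image_addRight_pair hmA hmB

/-- Claim 4: with `ρ A = B`, `ρ B = B - A` (rotation by 60°), the subgroup generated
by `α^m, β^m` is normal in the subgroup generated by `α, β, ρ`. -/
theorem stmt6 (A B : ℝ × ℝ) (ρ : (ℝ × ℝ) ≃ₗ[ℝ] ℝ × ℝ)
    (hA : ρ A = B) (hB : ρ B = B - A) (m : ℕ) (hm : 0 < m)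
    (L G : Subgroup (Equiv.Perm (ℝ × ℝ)))
    (hL : L = Subgroup.closure
      ({(Equiv.addRight A) ^ m, (Equiv.addRight B) ^ m} : Set (Equiv.Perm (ℝ × ℝ))))
    (hG : G = Subgroup.closure
      ({Equiv.addRight A, Equiv.addRight B, (ρ.toEquiv : Equiv.Perm (ℝ × ℝ))} :
        Set (Equiv.Perm (ℝ × ℝ)))) :
    L ≤ G ∧ (L.subgroupOf G).Normal :=
  stmt6_general A B ρ hA hB m L G hL hG
end

section
/- Let A, B be linearly independent vectors in ℝ², let a, b, c, d be integers with a·d − b·c ≠ 0, and set C = a•A + b•B and D = c•A + d•B. Let H be the additive subgroup of ℝ² generated by {A, B} and K the additive subgroup generated by {C, D}. Then K ≤ H, and the index of K in H (the relative index) equals |a·d − b·c|. -/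
/-!
Pulling back along the injective map `x ↦ x₁ A + x₂ B` identifies `H` with `ℤ²` and `K` with the
lattice spanned by the rows of `!![a, b; c, d]`; the index of a full-rank sublattice of `ℤⁿ` is
the absolute value of the determinant of any basis of it, here the rows.
-/

open Submodule

variable {ι : Type*} [Fintype ι]

theorem Matrix.index_span_rows_eq_natAbs_det [DecidableEq ι] {m : Matrix ι ι ℤ}
    (hm : m.det ≠ 0) :
    (span ℤ (Set.range m)).toAddSubgroup.index = m.det.natAbs := by
  have hrows := Matrix.linearIndependent_rows_of_det_ne_zero hm
  rw [AddSubgroup.index_eq_natAbs_det (Pi.basisFun ℤ ι) _ (Module.Basis.span hrows),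
    Pi.basisFun_det_apply]
  congr 3
  ext i j
  rw [Matrix.of_apply, Module.Basis.span_apply]

theorem span_range_matrix_combinations_le {R M : Type*} [Semiring R] [AddCommMonoid M]
    [Module R M] (e : ι → M) (m : Matrix ι ι R) :
    span R (Set.range fun i ↦ ∑ j, m i j • e j) ≤ span R (Set.range e) :=
  span_le.mpr <| Set.range_subset_iff.mpr fun _ ↦
    sum_mem fun j _ ↦ smul_mem _ _ (subset_span ⟨j, rfl⟩)

theorem relIndex_span_matrix_combinations_eq_natAbs_det [DecidableEq ι] {M : Type*}
    [AddCommGroup M] {e : ι → M} (he : LinearIndependent ℤ e) {m : Matrix ι ι ℤ} (hm : m.det ≠ 0) :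
    (span ℤ (Set.range fun i ↦ ∑ j, m i j • e j)).toAddSubgroup.relIndex
      (span ℤ (Set.range e)).toAddSubgroup = m.det.natAbs := by
  set ψ := Fintype.linearCombination ℤ e
  have hψ : Function.Injective ψ := linearIndependent_iff_injective_fintypeLinearCombination.mp he
  have hrows : span ℤ (Set.range fun i ↦ ∑ j, m i j • e j) = (span ℤ (Set.range m)).map ψ := by
    rw [map_span, ← Set.range_comp ψ m]
    rfl
  have hall : span ℤ (Set.range e) = (⊤ : Submodule ℤ (ι → ℤ)).map ψ := by
    rw [Submodule.map_top, Fintype.range_linearCombination]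
  rw [hrows, hall, map_toAddSubgroup, map_toAddSubgroup,
    AddSubgroup.relIndex_map_map_of_injective _ _ hψ, top_toAddSubgroup,
    AddSubgroup.relIndex_top_right, Matrix.index_span_rows_eq_natAbs_det hm]

/-- Remark 1: the lattice `K = ⟨C, D⟩` is contained in `H = ⟨A, B⟩` and its index
in `H` equals `|ad - bc|`. -/
theorem stmt10 (A B : ℝ × ℝ) (hAB : LinearIndependent ℝ ![A, B])
    (a b c d : ℤ) (hdet : a * d - b * c ≠ 0)
    (C D : ℝ × ℝ) (hC : C = a • A + b • B) (hD : D = c • A + d • B)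
    (H K : AddSubgroup (ℝ × ℝ))
    (hH : H = AddSubgroup.closure ({A, B} : Set (ℝ × ℝ)))
    (hK : K = AddSubgroup.closure ({C, D} : Set (ℝ × ℝ))) :
    K ≤ H ∧ K.relIndex H = (a * d - b * c).natAbs := by
  let m : Matrix (Fin 2) (Fin 2) ℤ := !![a, b; c, d]
  have hm : m.det = a * d - b * c := Matrix.det_fin_two_of a b c d
  have hCD : (fun i ↦ ∑ j, m i j • ![A, B] j) = ![C, D] := by
    ext i : 1
    fin_cases i <;> simp [m, Fin.sum_univ_two, hC, hD]
  have hH' : H = (span ℤ (Set.range ![A, B])).toAddSubgroup := by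
    rw [hH, span_int_eq_addSubgroupClosure, Matrix.range_cons_cons_empty]
  have hK' : K = (span ℤ (Set.range fun i ↦ ∑ j, m i j • ![A, B] j)).toAddSubgroup := by
    rw [hK, hCD, span_int_eq_addSubgroupClosure, Matrix.range_cons_cons_empty]
  rw [hK', hH', ← hm]
  exact ⟨span_range_matrix_combinations_le _ m,
    relIndex_span_matrix_combinations_eq_natAbs_det (hAB.restrict_scalars' ℤ) (hm ▸ hdet)⟩
end

section
/- Let A, B be linearly independent vectors in ℝ², let a, b, c, d be integers with a·d − b·c ≠ 0, set C = a•A + b•B and D = c•A + d•B, and let K be the additive subgroup of ℝ² generated by {C, D}. Let m be the smallest positive integer such that m•A ∈ K and m•B ∈ K, and let L be the additive subgroup generated by {m•A, m•B}. Then L ≤ K, and the index of L in K (the relative index) equals m² / |a·d − b·c|. -/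
/-!
Coordinates with respect to `A, B` give an injective group homomorphism `ℤ² → ℝ²` which carries
the column lattices of `!![a, c; b, d]` and `!![m, 0; 0, m]` onto `K` and `L`. In `ℤ²` the column
lattice of a nonsingular integer matrix has index `|det|`, so multiplicativity of the index gives
`[K : L] · |ad - bc| = m²`.
-/

open Matrix

section ColumnLattice

variable {ι : Type*} [Fintype ι]

theorem Matrix.index_closure_range_col [DecidableEq ι] (M : Matrix ι ι ℤ) (hM : M.det ≠ 0) :
    (AddSubgroup.closure (Set.range M.col)).index = M.det.natAbs := by
  have hbasis := Submodule.natAbs_det_basis_change (Pi.basisFun ℤ ι) _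
    (Module.Basis.span (linearIndependent_cols_of_det_ne_zero hM))
  rw [Pi.basisFun_det_apply] at hbasis
  rw [← Submodule.span_int_eq_addSubgroupClosure]
  refine hbasis.symm.trans ?_
  rw [← det_transpose M]
  congr 3
  ext i j
  simp [Module.Basis.span_apply]

theorem Matrix.relIndex_closure_range_col_mul_natAbs_det [DecidableEq ι] {M N : Matrix ι ι ℤ}
    (hM : M.det ≠ 0) (hN : N.det ≠ 0)
    (hle : AddSubgroup.closure (Set.range N.col) ≤ AddSubgroup.closure (Set.range M.col)) :
    (AddSubgroup.closure (Set.range N.col)).relIndex (AddSubgroup.closure (Set.range M.col)) *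
      M.det.natAbs = N.det.natAbs := by
  rw [← index_closure_range_col M hM, ← index_closure_range_col N hN,
    AddSubgroup.relIndex_mul_index hle]

theorem Matrix.map_closure_range_col_linearCombination {E : Type*} [AddCommGroup E]
    (v : ι → E) (M : Matrix ι ι ℤ) :
    (AddSubgroup.closure (Set.range M.col)).map (Fintype.linearCombination ℤ v).toAddMonoidHom =
      AddSubgroup.closure (Set.range fun j => ∑ i, M i j • v i) := by
  rw [AddMonoidHom.map_closure, ← Set.range_comp]
  rfl

end ColumnLattice

theorem stmt11_general (A B : ℝ × ℝ) (hAB : LinearIndependent ℝ ![A, B])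
    (a b c d : ℤ) (hdet : a * d - b * c ≠ 0)
    (C D : ℝ × ℝ) (hC : C = a • A + b • B) (hD : D = c • A + d • B)
    (K : AddSubgroup (ℝ × ℝ)) (hK : K = AddSubgroup.closure ({C, D} : Set (ℝ × ℝ)))
    (m : ℕ) (hm : 0 < m) (hmA : m • A ∈ K) (hmB : m • B ∈ K)
    (L : AddSubgroup (ℝ × ℝ))
    (hL : L = AddSubgroup.closure ({m • A, m • B} : Set (ℝ × ℝ))) :
    L ≤ K ∧ L.relIndex K = m ^ 2 / (a * d - b * c).natAbs := by
  let φ := (Fintype.linearCombination ℤ ![A, B]).toAddMonoidHom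
  have hφ : Function.Injective φ := (hAB.restrict_scalars' ℤ).fintypeLinearCombination_injective
  let MK := !![a, c; b, d]
  let ML := !![(m : ℤ), 0; 0, m]
  have hK₀ : (AddSubgroup.closure (Set.range MK.col)).map φ = K := by
    rw [map_closure_range_col_linearCombination, hK, hC, hD, ← range_cons_cons_empty _ _ ![]]
    congr 2
    ext j : 1
    fin_cases j <;> simp [MK]
  have hL₀ : (AddSubgroup.closure (Set.range ML.col)).map φ = L := by
    rw [map_closure_range_col_linearCombination, hL, ← range_cons_cons_empty _ _ ![]]
    congr 2
    ext j : 1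
    fin_cases j <;> simp [ML]
  have hLK : L ≤ K := by
    rw [hL, AddSubgroup.closure_le, Set.insert_subset_iff, Set.singleton_subset_iff]
    exact ⟨hmA, hmB⟩
  have hdetK : MK.det = a * d - b * c := by simp [MK, det_fin_two_of]; ring
  have hdetL : ML.det = m ^ 2 := by simp [ML, det_fin_two_of]; ring
  have hindex := relIndex_closure_range_col_mul_natAbs_det (M := MK) (N := ML) (hdetK ▸ hdet)
    (by rw [hdetL]; positivity)
    (by rwa [← hK₀, ← hL₀, AddSubgroup.map_le_map_iff_of_injective hφ] at hLK)
  rw [hdetK, hdetL, Int.natAbs_pow, Int.natAbs_natCast] at hindex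
  refine ⟨hLK, ?_⟩
  rw [← hK₀, ← hL₀, AddSubgroup.relIndex_map_map_of_injective _ _ hφ]
  exact (Nat.div_eq_of_eq_mul_left (Int.natAbs_pos.mpr hdet) hindex.symm).symm

/-- Remark 1: the cover `E/L → E/K` is `n`-fold with `n = [K : L] = m² / |ad - bc|`,
where `m` is the smallest positive integer with `m • A, m • B ∈ K` and
`L = ⟨m • A, m • B⟩`. -/
theorem stmt11 (A B : ℝ × ℝ) (hAB : LinearIndependent ℝ ![A, B])
    (a b c d : ℤ) (hdet : a * d - b * c ≠ 0)
    (C D : ℝ × ℝ) (hC : C = a • A + b • B) (hD : D = c • A + d • B)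
    (K : AddSubgroup (ℝ × ℝ)) (hK : K = AddSubgroup.closure ({C, D} : Set (ℝ × ℝ)))
    (m : ℕ) (hm : 0 < m) (hmA : m • A ∈ K) (hmB : m • B ∈ K)
    (hmin : ∀ k : ℕ, 0 < k → k • A ∈ K → k • B ∈ K → m ≤ k)
    (L : AddSubgroup (ℝ × ℝ))
    (hL : L = AddSubgroup.closure ({m • A, m • B} : Set (ℝ × ℝ))) :
    L ≤ K ∧ L.relIndex K = m ^ 2 / (a * d - b * c).natAbs :=
  stmt11_general A B hAB a b c d hdet C D hC hD K hK m hm hmA hmB L hL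
end

section
/- Let A, B be linearly independent vectors in ℝ², let a, b, c, d be integers with a·d − b·c ≠ 0, set C = a•A + b•B and D = c•A + d•B, and let K be the additive subgroup of ℝ² generated by {C, D}. Let m be the smallest positive integer such that m•A ∈ K and m•B ∈ K. Then m = |a·d − b·c| / gcd(a, b, c, d); in particular m divides |a·d − b·c|. -/
/-!
Over ℤ the vectors `A`, `B` are independent, so `k • A + l • B` lies in the lattice spanned by
`C` and `D` exactly when the system `(x, y) [[a, b], [c, d]] = (k, l)` has an integer solution.
By Cramer's rule this means `Δ = ad - bc` divides `kd - lc` and `la - kb`. Hence `k • A` and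
`k • B` both lie in the lattice iff `Δ ∣ k • (a, b, c, d)`, i.e. iff `Δ ∣ k * gcd(a, b, c, d)`,
i.e. iff `Δ / gcd(a, b, c, d) ∣ k`; the least positive such `k` is `|Δ| / gcd(a, b, c, d)`.
-/

lemma exists_int_solution_iff_det_dvd {a b c d : ℤ} (hdet : a * d - b * c ≠ 0) (k l : ℤ) :
    (∃ x y : ℤ, x * a + y * c = k ∧ x * b + y * d = l) ↔
      a * d - b * c ∣ k * d - l * c ∧ a * d - b * c ∣ l * a - k * b := by
  constructor
  · rintro ⟨x, y, rfl, rfl⟩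
    exact ⟨⟨x, by ring⟩, ⟨y, by ring⟩⟩
  · rintro ⟨⟨x, hx⟩, ⟨y, hy⟩⟩
    refine ⟨x, y, mul_left_cancel₀ hdet ?_, mul_left_cancel₀ hdet ?_⟩
    · linear_combination (-a) * hx - c * hy
    · linear_combination (-b) * hx - d * hy

lemma zsmul_add_zsmul_mem_closure_pair_iff {V : Type*} [AddCommGroup V] {A B : V}
    (hAB : LinearIndependent ℤ ![A, B]) (a b c d k l : ℤ) :
    k • A + l • B ∈ AddSubgroup.closure {a • A + b • B, c • A + d • B} ↔
      ∃ x y : ℤ, x * a + y * c = k ∧ x * b + y * d = l := by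
  rw [AddSubgroup.mem_closure_pair]
  refine exists₂_congr fun x y => ?_
  have hxy : x • (a • A + b • B) + y • (c • A + d • B) =
      (x * a + y * c) • A + (x * b + y * d) • B := by
    module
  rw [hxy]
  exact ⟨hAB.eq_of_pair, fun ⟨hk, hl⟩ => hk ▸ hl ▸ rfl⟩

lemma Int.dvd_mul_gcd {n k x y : ℤ} (hx : n ∣ k * x) (hy : n ∣ k * y) :
    n ∣ k * Int.gcd x y := by
  rw [Int.gcd_eq_gcd_ab, mul_add, ← mul_assoc, ← mul_assoc]
  exact dvd_add (hx.mul_right _) (hy.mul_right _)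

lemma Int.gcd_gcd_gcd_dvd (a b c d : ℤ) :
    let g : ℤ := Int.gcd a (Int.gcd b (Int.gcd c d))
    g ∣ a ∧ g ∣ b ∧ g ∣ c ∧ g ∣ d := by
  have hbcd := Int.gcd_dvd_right a (Int.gcd b (Int.gcd c d))
  have hcd := hbcd.trans (Int.gcd_dvd_right b (Int.gcd c d))
  exact ⟨Int.gcd_dvd_left _ _, hbcd.trans (Int.gcd_dvd_left _ _),
    hcd.trans (Int.gcd_dvd_left _ _), hcd.trans (Int.gcd_dvd_right _ _)⟩

lemma zsmul_mem_closure_pair_iff {V : Type*} [AddCommGroup V] {A B : V}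
    (hAB : LinearIndependent ℤ ![A, B]) {a b c d : ℤ} (hdet : a * d - b * c ≠ 0) (k : ℤ) :
    (k • A ∈ AddSubgroup.closure {a • A + b • B, c • A + d • B} ∧
        k • B ∈ AddSubgroup.closure {a • A + b • B, c • A + d • B}) ↔
      a * d - b * c ∣ k * Int.gcd a (Int.gcd b (Int.gcd c d)) := by
  have hA := zsmul_add_zsmul_mem_closure_pair_iff hAB a b c d k 0
  have hB := zsmul_add_zsmul_mem_closure_pair_iff hAB a b c d 0 k
  rw [exists_int_solution_iff_det_dvd hdet] at hA hB
  simp only [zero_smul, add_zero, zero_add, zero_mul, sub_zero, zero_sub, dvd_neg] at hA hB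
  rw [hA, hB]
  constructor
  · rintro ⟨⟨hd, hb⟩, hc, ha⟩
    exact Int.dvd_mul_gcd ha (Int.dvd_mul_gcd hb (Int.dvd_mul_gcd hc hd))
  · intro h
    obtain ⟨ha, hb, hc, hd⟩ := Int.gcd_gcd_gcd_dvd a b c d
    have h' {x : ℤ} (hx : (Int.gcd a (Int.gcd b (Int.gcd c d)) : ℤ) ∣ x) :
        a * d - b * c ∣ k * x :=
      h.trans (mul_dvd_mul_left k hx)
    exact ⟨⟨h' hd, h' hb⟩, h' hc, h' ha⟩

/-- Explicit description of the integer `m` from Claims 1 and 3: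
`m = |ad - bc| / gcd(a, b, c, d)`; in particular `m` divides `|ad - bc|`. -/
theorem stmt14 (A B : ℝ × ℝ) (hAB : LinearIndependent ℝ ![A, B])
    (a b c d : ℤ) (hdet : a * d - b * c ≠ 0)
    (C D : ℝ × ℝ) (hC : C = a • A + b • B) (hD : D = c • A + d • B)
    (K : AddSubgroup (ℝ × ℝ)) (hK : K = AddSubgroup.closure ({C, D} : Set (ℝ × ℝ)))
    (m : ℕ) (hm : 0 < m) (hmA : m • A ∈ K) (hmB : m • B ∈ K)
    (hmin : ∀ k : ℕ, 0 < k → k • A ∈ K → k • B ∈ K → m ≤ k) :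
    m = (a * d - b * c).natAbs / Int.gcd a (Int.gcd b (Int.gcd c d)) ∧
      m ∣ (a * d - b * c).natAbs := by
  subst hC hD
  set g := Int.gcd a (Int.gcd b (Int.gcd c d))
  set N := (a * d - b * c).natAbs
  have hgN : g ∣ N := by
    obtain ⟨ha, hb, -, -⟩ := Int.gcd_gcd_gcd_dvd a b c d
    exact Int.natCast_dvd.mp (dvd_sub (ha.mul_right d) (hb.mul_right c))
  have hN : 0 < N := Int.natAbs_pos.mpr hdet
  have hg : 0 < g := Nat.pos_of_dvd_of_pos hgN hN
  have hmem (k : ℕ) : k • A ∈ K ∧ k • B ∈ K ↔ N / g ∣ k := by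
    rw [hK, ← natCast_zsmul A k, ← natCast_zsmul B k,
      zsmul_mem_closure_pair_iff (hAB.restrict_scalars' ℤ) hdet, ← Int.natAbs_dvd_natAbs,
      Int.natAbs_mul, Int.natAbs_natCast, Int.natAbs_natCast, Nat.div_dvd_iff_dvd_mul hgN hg,
      mul_comm g k]
  have hpos : 0 < N / g := Nat.div_pos (Nat.le_of_dvd hN hgN) hg
  obtain ⟨hA, hB⟩ := (hmem (N / g)).2 dvd_rfl
  have hmN : m = N / g :=
    le_antisymm (hmin _ hpos hA hB) (Nat.le_of_dvd hm ((hmem m).1 ⟨hmA, hmB⟩))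
  exact ⟨hmN, hmN ▸ Nat.div_dvd_of_dvd hgN⟩
end
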